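/- Let D ≥ 2, and let p, q be primes with p < q < 2p such that the field L = ℚ((p/q)^{1/D}) has degree D and (pq)^{D-1} divides Δ_L. Then H((p/q)^{1/D}) ≤ 2^{1/(2D)}·|Δ_L|^{1/(2D(D-1))}. -/

import Mathlib

open Polynomial IntermediateField Filter

/-- The Mahler measure of an integer polynomial: absolute value of the leading
coefficient times the product of `max 1 |root|` over its complex roots. -/
noncomputable def mahlerMeasure (f : Polynomial ℤ) : ℝ :=
  |(f.leadingCoeff : ℝ)| *
    (((f.map (Int.castRingHom ℂ)).roots).map (fun z => max 1 ‖z‖)).prod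

/-- The absolute multiplicative Weil height of a complex (algebraic) number:
`M(f)^(1/deg α)` where `f` is the primitive integer polynomial proportional to
the minimal polynomial of `α` over `ℚ`. -/
noncomputable def weilHeight (α : ℂ) : ℝ :=
  mahlerMeasure
      ((IsLocalization.integerNormalization (nonZeroDivisors ℤ) (minpoly ℚ α)).primPart) ^
    ((1 : ℝ) / (minpoly ℚ α).natDegree)


/-- The absolute discriminant of a finite-dimensional subfield of `ℂ`. -/
noncomputable def discrOf (L : IntermediateField ℚ ℂ) (h : FiniteDimensional ℚ L) : ℤ :=
  letI := h
  letI : NumberField L := ⟨⟩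
  NumberField.discr L

lemma mahlerMeasure_neg (f : Polynomial ℤ) : mahlerMeasure (-f) = mahlerMeasure f := by
  simp [_root_.mahlerMeasure, Polynomial.map_neg, roots_neg]

/-- For primes `p < q < 2p`, if `L = ℚ((p/q)^{1/D})` has degree `D` and `(pq)^{D-1}`
divides `Δ_L`, then `H((p/q)^{1/D}) ≤ 2^{1/(2D)}·|Δ_L|^{1/(2D(D-1))}`. -/
theorem height_le_discr_pow (D : ℕ) (hD : 2 ≤ D) (p q : ℕ)
    (hp : p.Prime) (hq : q.Prime) (hpq : p < q) (hq2p : q < 2 * p)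
    (α : ℂ) (hα : α ^ D = (p : ℂ) / q)
    (hfd : FiniteDimensional ℚ (IntermediateField.adjoin ℚ {α} : IntermediateField ℚ ℂ))
    (hdeg : Module.finrank ℚ (IntermediateField.adjoin ℚ {α} : IntermediateField ℚ ℂ) = D)
    (hdvd : ((p * q : ℕ) : ℤ) ^ (D - 1) ∣ discrOf (IntermediateField.adjoin ℚ {α}) hfd) :
    weilHeight α ≤ (2 : ℝ) ^ ((1 : ℝ) / (2 * D)) *
      (|discrOf (IntermediateField.adjoin ℚ {α}) hfd| : ℝ) ^ ((1 : ℝ) / (2 * D * (D - 1))) := by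
  have hp0 : 0 < p := hp.pos
  have hq0 : 0 < q := hq.pos
  have hq0' : (q:ℤ) ≠ 0 := by exact_mod_cast hq0.ne'
  -- Step 1 : minpoly
  set f : ℚ[X] := X ^ D - C ((p:ℚ)/(q:ℚ)) with hf
  have hfm : f.Monic := monic_X_pow_sub_C _ (by omega)
  have hroot : Polynomial.aeval α f = 0 := by simp [hf, hα]
  have hint : IsIntegral ℚ α := ⟨f, hfm, hroot⟩
  have hndeg : (minpoly ℚ α).natDegree = D := by
    rw [← hdeg, IntermediateField.adjoin.finrank hint]
  have hminp : minpoly ℚ α = f := by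
    obtain ⟨c, hc⟩ := minpoly.dvd ℚ α hroot
    have hfD : f.natDegree = D := by rw [hf, natDegree_X_pow_sub_C]
    have hm : (minpoly ℚ α).Monic := minpoly.monic hint
    have hcm : c.Monic := hm.of_mul_monic_left (hc ▸ hfm)
    have hc0 : c.natDegree = 0 := by
      have := natDegree_mul hm.ne_zero hcm.ne_zero
      rw [← hc, hfD, hndeg] at this
      omega
    rw [hc, hcm.natDegree_eq_zero.mp hc0, mul_one]
  -- Step 2 : the integer polynomial h
  set h : ℤ[X] := C (q:ℤ) * X ^ D - C (p:ℤ) with hh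
  have hhmap : h.map (algebraMap ℤ ℚ) = C (q:ℚ) * f := by
    rw [hh, hf]
    push_cast [Polynomial.map_sub, Polynomial.map_mul, Polynomial.map_pow, Polynomial.map_C,
      Polynomial.map_X]
    rw [mul_sub, ← C_mul]
    congr 1
    rw [mul_div_cancel₀]
    exact_mod_cast hq0.ne'
  have hhprim : h.IsPrimitive := by
    intro r hr
    rw [C_dvd_iff_dvd_coeff] at hr
    have h1 : r ∣ (q:ℤ) := by
      have := hr D
      simpa [hh, coeff_sub, coeff_C_mul, coeff_X_pow, coeff_C,
        if_neg (by omega : ¬ D = 0)] using this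
    have h2 : r ∣ (p:ℤ) := by
      have := hr 0
      have h0 : (h.coeff 0) = -(p:ℤ) := by
        simp [hh, coeff_sub, coeff_C_mul, coeff_X_pow, if_neg (by omega : ¬ 0 = D)]
      rw [h0] at this
      exact (dvd_neg).mp this
    have hcop : IsCoprime (q:ℤ) (p:ℤ) := by
      rw [Int.isCoprime_iff_gcd_eq_one]
      simpa [Int.gcd_natCast_natCast] using
        (Nat.coprime_primes hq hp).mpr (by omega : q ≠ p)
    exact hcop.isUnit_of_dvd' h1 h2
  -- Step 3 : primPart of integerNormalization is ± h
  set g : ℤ[X] := IsLocalization.integerNormalization (nonZeroDivisors ℤ) (minpoly ℚ α) with hg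
  obtain ⟨b, hb⟩ := IsLocalization.integerNormalization_map_to_map
    (nonZeroDivisors ℤ) (minpoly ℚ α)
  have hb0 : ((b:ℤ):ℚ) ≠ 0 := by
    have := nonZeroDivisors.coe_ne_zero b
    exact_mod_cast this
  have hgmap : g.map (algebraMap ℤ ℚ) = C ((b:ℤ):ℚ) * f := by
    rw [← hg] at hb
    rw [hb, hminp, ← Int.cast_smul_eq_zsmul ℚ, Polynomial.smul_eq_C_mul]
  have hg0 : g ≠ 0 := by
    intro h0
    rw [h0, Polynomial.map_zero] at hgmap
    exact hfm.ne_zero (by simpa [hb0] using hgmap.symm)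
  have hcont0 : ((g.content : ℤ):ℚ) ≠ 0 := by
    exact_mod_cast (Polynomial.content_eq_zero_iff.not.mpr hg0)
  have hppmap : C ((g.content:ℚ)) * (g.primPart.map (algebraMap ℤ ℚ)) = C ((b:ℤ):ℚ) * f := by
    have h2 := congrArg (Polynomial.map (algebraMap ℤ ℚ)) (Polynomial.eq_C_content_mul_primPart g)
    rw [Polynomial.map_mul, Polynomial.map_C, hgmap] at h2
    simp only [eq_intCast] at h2
    exact h2.symm
  have hbc : ((b:ℤ):ℚ)/(g.content:ℚ) ≠ 0 := div_ne_zero hb0 hcont0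
  have hppmap' : g.primPart.map (algebraMap ℤ ℚ) = C (((b:ℤ):ℚ)/(g.content:ℚ)) * f := by
    apply mul_left_cancel₀ (a := C ((g.content:ℚ))) (by
      simpa using hcont0)
    rw [hppmap, ← mul_assoc, ← C_mul, mul_comm ((g.content:ℚ)), div_mul_cancel₀ _ hcont0]
  have huq : IsUnit (C ((q:ℚ))) :=
    Polynomial.isUnit_C.mpr (isUnit_iff_ne_zero.mpr (by exact_mod_cast hq0.ne'))
  have hub : IsUnit (C (((b:ℤ):ℚ)/(g.content:ℚ))) :=
    Polynomial.isUnit_C.mpr (isUnit_iff_ne_zero.mpr hbc)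
  have hassoc : Associated h g.primPart := by
    apply associated_of_dvd_dvd
    · apply hhprim.dvd_of_fraction_map_dvd_fraction_map (K := ℚ) (q := g.primPart)
      rw [hhmap, hppmap']
      exact mul_dvd_mul huq.dvd dvd_rfl
    · apply g.isPrimitive_primPart.dvd_of_fraction_map_dvd_fraction_map (K := ℚ) (q := h)
      rw [hhmap, hppmap']
      exact mul_dvd_mul hub.dvd dvd_rfl
  -- Step 4 : Mahler measure
  have hmh : mahlerMeasure h = q := by
    have hlc : h.leadingCoeff = (q:ℤ) := by
      rw [hh, Polynomial.leadingCoeff, natDegree_sub_C, natDegree_C_mul hq0',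
        natDegree_X_pow, coeff_sub, coeff_C_mul, coeff_X_pow, if_pos rfl, coeff_C,
        if_neg (by omega)]
      ring
    have hmap : h.map (Int.castRingHom ℂ) = C (q:ℂ) * X ^ D - C (p:ℂ) := by
      simp [hh, Polynomial.map_sub, Polynomial.map_mul, Polynomial.map_pow]
    have hne : C (q:ℂ) * X ^ D - C (p:ℂ) ≠ 0 := by
      intro h0
      have := congrArg (fun f => Polynomial.coeff f D) h0
      simp [coeff_sub, coeff_C_mul, coeff_X_pow, coeff_C, if_neg (by omega : ¬ D = 0)] at this
      exact hq0.ne' (by exact_mod_cast this)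
    have hprod : ((h.map (Int.castRingHom ℂ)).roots.map
        (fun z => max 1 ‖z‖)).prod = 1 := by
      rw [hmap]
      apply Multiset.prod_eq_one
      intro x hx
      obtain ⟨z, hz, rfl⟩ := Multiset.mem_map.mp hx
      have hroot : (q:ℂ) * z ^ D - p = 0 := by
        have := (mem_roots hne).mp hz
        simpa [IsRoot, eval_sub, eval_mul, eval_pow] using this
      have habs : ‖z‖ ^ D = (p:ℝ) / q := by
        have hzD : z ^ D = (p:ℂ) / q := by
          rw [eq_div_iff (by exact_mod_cast hq0.ne' : (q:ℂ) ≠ 0)]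
          linear_combination hroot
        have := congrArg (‖·‖) hzD
        rwa [norm_pow, norm_div, Complex.norm_natCast, Complex.norm_natCast] at this
      have hlt : ‖z‖ < 1 := by
        by_contra hge
        push_neg at hge
        have h1 : (1:ℝ) ≤ ‖z‖ ^ D := one_le_pow₀ hge
        rw [habs] at h1
        have h2 : (q:ℝ) ≤ p := (one_le_div (by positivity)).mp h1
        have h3 : q ≤ p := by exact_mod_cast h2
        omega
      simp [max_eq_left hlt.le]
    rw [_root_.mahlerMeasure, hlc, hprod, mul_one]
    simp
  have hmg : mahlerMeasure g.primPart = q := by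
    obtain ⟨u, hu⟩ := hassoc
    obtain ⟨r, hru, hrC⟩ := Polynomial.isUnit_iff.mp u.isUnit
    rcases Int.isUnit_iff.mp hru with hr1 | hr1
    · rw [← hu, ← hrC, hr1, map_one, mul_one, hmh]
    · rw [← hu, ← hrC, hr1, map_neg, map_one, mul_neg, mul_one, mahlerMeasure_neg, hmh]
  -- Step 5 : weilHeight value
  have hw : weilHeight α = (q:ℝ) ^ ((1:ℝ)/D) := by
    rw [weilHeight, ← hg, hmg, hndeg]
  -- Step 6 : discriminant bound
  set Δ : ℤ := discrOf (IntermediateField.adjoin ℚ {α}) hfd with hΔdef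
  have hΔ0 : Δ ≠ 0 := by
    rw [hΔdef]
    unfold discrOf
    letI := hfd
    letI : NumberField (IntermediateField.adjoin ℚ {α} : IntermediateField ℚ ℂ) := ⟨⟩
    exact NumberField.discr_ne_zero _
  have hge : ((p*q : ℕ):ℤ) ^ (D-1) ≤ |Δ| :=
    Int.le_of_dvd (abs_pos.mpr hΔ0) ((dvd_abs _ _).mpr hdvd)
  -- Step 7 : real inequality
  rw [hw]
  have hD0 : (0:ℝ) < (D:ℝ) := by positivity
  have hD1 : (0:ℝ) < (D:ℝ) - 1 := by
    have : (2:ℝ) ≤ (D:ℝ) := by exact_mod_cast hD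
    linarith
  have hA1 : (1:ℝ) ≤ ((p*q:ℕ):ℝ) ^ ((D:ℝ) - 1) := by
    apply Real.one_le_rpow _ hD1.le
    have : 1 ≤ p * q := Nat.one_le_iff_ne_zero.mpr (by positivity)
    exact_mod_cast this
  have hAge : ((p*q:ℕ):ℝ) ^ ((D:ℝ) - 1) ≤ (|Δ| : ℝ) := by
    have : (((p*q:ℕ):ℤ) ^ (D-1) : ℝ) ≤ ((|Δ|:ℤ) : ℝ) := by exact_mod_cast hge
    calc ((p*q:ℕ):ℝ) ^ ((D:ℝ) - 1) = ((p*q:ℕ):ℝ) ^ ((D - 1 : ℕ) : ℝ) := by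
          congr 1
          push_cast [Nat.cast_sub (by omega : 1 ≤ D)]
          ring
      _ = ((p*q:ℕ):ℝ) ^ (D - 1 : ℕ) := Real.rpow_natCast _ _
      _ ≤ (|Δ| : ℝ) := by push_cast at this ⊢; exact this
  have e1 : (q:ℝ) ^ ((1:ℝ)/D) = ((q:ℝ)^(2:ℕ)) ^ ((1:ℝ)/(2*D)) := by
    rw [← Real.rpow_natCast (q:ℝ) 2, ← Real.rpow_mul (by positivity)]
    congr 1
    push_cast
    field_simp
  have e2 : ((q:ℝ)^(2:ℕ)) ^ ((1:ℝ)/(2*D)) ≤ ((2 * (p*q:ℕ) : ℝ)) ^ ((1:ℝ)/(2*D)) := by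
    apply Real.rpow_le_rpow (by positivity) _ (by positivity)
    push_cast
    have h1 : (q:ℝ) < 2*p := by exact_mod_cast hq2p
    have h2 : (0:ℝ) < q := by positivity
    nlinarith
  have e3 : ((2 * (p*q:ℕ) : ℝ)) ^ ((1:ℝ)/(2*D)) =
      (2:ℝ) ^ ((1:ℝ)/(2*D)) * ((p*q:ℕ):ℝ) ^ ((1:ℝ)/(2*D)) :=
    Real.mul_rpow (by norm_num) (by positivity)
  have e4 : ((p*q:ℕ):ℝ) ^ ((1:ℝ)/(2*D)) =
      (((p*q:ℕ):ℝ) ^ ((D:ℝ) - 1)) ^ ((1:ℝ)/(2*D*((D:ℝ)-1))) := by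
    rw [← Real.rpow_mul (by positivity)]
    congr 1
    field_simp
  have e5 : (((p*q:ℕ):ℝ) ^ ((D:ℝ) - 1)) ^ ((1:ℝ)/(2*D*((D:ℝ)-1))) ≤
      (|Δ| : ℝ) ^ ((1:ℝ)/(2*D*((D:ℝ)-1))) :=
    Real.rpow_le_rpow (by positivity) hAge (by positivity)
  calc (q:ℝ) ^ ((1:ℝ)/D) ≤ (2:ℝ) ^ ((1:ℝ)/(2*D)) *
        (((p*q:ℕ):ℝ) ^ ((D:ℝ) - 1)) ^ ((1:ℝ)/(2*D*((D:ℝ)-1))) := by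
        rw [e1, ← e4, ← e3]; exact e2
    _ ≤ (2:ℝ) ^ ((1:ℝ)/(2*D)) * (|Δ| : ℝ) ^ ((1:ℝ)/(2*D*((D:ℝ)-1))) := by
        apply mul_le_mul_of_nonneg_left e5 (by positivity)
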